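/- Let α, γ > 0 and β ∈ ℝ with Q := β/√(αγ) satisfying -1 < Q < 0. Then for all ξ, η ∈ ℝ², Re A(ξ + iη) ≥ -k A(η), where A(z) = α z₁⁴ + 2β z₁² z₂² + γ z₂⁴ and k = 8(1-Q)/(1+Q)². -/
import Mathlib

set_option maxHeartbeats 1000000


open Complex

lemma key_ineq (Q a b c d m n : ℝ) (hQ1 : -1 < Q) (hQ2 : Q < 0)
    (hab : m ^ 2 = a * b) (hcd : n ^ 2 = c * d) (hmn : 0 ≤ 2 * m * n + a * d + b * c) :
    0 ≤ (1 + Q) ^ 2 * (a ^ 2 - 6 * m ^ 2 + b ^ 2 + 2 * Q * (a - b) * (c - d) - 8 * Q * m * n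
          + c ^ 2 - 6 * n ^ 2 + d ^ 2)
        + 8 * (1 - Q) * (b ^ 2 + 2 * Q * b * d + d ^ 2) := by
  have h1 : 0 < 1 + Q := by linarith
  have h2 : 0 < 1 - Q := by linarith
  have hnQ : 0 < -Q := by linarith
  have key : 2 * (1 - Q) * ((1 + Q) ^ 2 * (a ^ 2 - 6 * m ^ 2 + b ^ 2
        + 2 * Q * (a - b) * (c - d) - 8 * Q * m * n + c ^ 2 - 6 * n ^ 2 + d ^ 2)
        + 8 * (1 - Q) * (b ^ 2 + 2 * Q * b * d + d ^ 2))
      = -8 * Q * (1 - Q) * (1 + Q) ^ 2 * (2 * m * n + a * d + b * c)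
        + (1 + Q) * (1 - Q) * ((1 + Q) * (a + c) - (3 - Q) * (b + d)) ^ 2
        + (1 + Q) ^ 2 * ((1 - Q) * (a - c) - (3 + Q) * (b - d)) ^ 2
        - 16 * Q * (3 + Q ^ 2) * (b - d) ^ 2 := by
    linear_combination (-12 * (1 - Q) * (1 + Q) ^ 2) * hab + (-12 * (1 - Q) * (1 + Q) ^ 2) * hcd
  have t1 : 0 ≤ -8 * Q * (1 - Q) * (1 + Q) ^ 2 * (2 * m * n + a * d + b * c) := by
    have hc : 0 < 8 * (-Q) * (1 - Q) * (1 + Q) ^ 2 :=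
      mul_pos (mul_pos (mul_pos (by norm_num : (0:ℝ) < 8) hnQ) h2) (pow_pos h1 2)
    have heq : -8 * Q * (1 - Q) * (1 + Q) ^ 2 = 8 * (-Q) * (1 - Q) * (1 + Q) ^ 2 := by ring
    rw [heq]
    exact mul_nonneg hc.le hmn
  have t2 : 0 ≤ (1 + Q) * (1 - Q) * ((1 + Q) * (a + c) - (3 - Q) * (b + d)) ^ 2 := by
    positivity
  have t3 : 0 ≤ (1 + Q) ^ 2 * ((1 - Q) * (a - c) - (3 + Q) * (b - d)) ^ 2 := by positivity
  have t4 : 0 ≤ -16 * Q * (3 + Q ^ 2) * (b - d) ^ 2 := by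
    have hc : 0 < 16 * (-Q) * (3 + Q ^ 2) := by
      have h3 : (0:ℝ) < 3 + Q ^ 2 := by positivity
      exact mul_pos (mul_pos (by norm_num : (0:ℝ) < 16) hnQ) h3
    have heq : -16 * Q * (3 + Q ^ 2) * (b - d) ^ 2 = 16 * (-Q) * (3 + Q ^ 2) * (b - d) ^ 2 := by
      ring
    rw [heq]
    exact mul_nonneg hc.le (sq_nonneg _)
  nlinarith [key, t1, t2, t3, t4, h2]

/-- For `α, γ > 0`, `Q = β/√(αγ) ∈ (-1,0)`, and all `ξ, η ∈ ℝ²`,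
`Re A(ξ+iη) ≥ -k A(η)` with `k = 8(1-Q)/(1+Q)²`. -/
theorem stmt0 (α β γ : ℝ) (hα : 0 < α) (hγ : 0 < γ)
    (hQ1 : -1 < β / Real.sqrt (α * γ)) (hQ2 : β / Real.sqrt (α * γ) < 0)
    (ξ1 ξ2 η1 η2 : ℝ) :
    ((α : ℂ) * (ξ1 + η1 * I) ^ 4 + 2 * β * (ξ1 + η1 * I) ^ 2 * (ξ2 + η2 * I) ^ 2
        + γ * (ξ2 + η2 * I) ^ 4).re
      ≥ -(8 * (1 - β / Real.sqrt (α * γ)) / (1 + β / Real.sqrt (α * γ)) ^ 2)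
          * (α * η1 ^ 4 + 2 * β * η1 ^ 2 * η2 ^ 2 + γ * η2 ^ 4) := by
  set Q : ℝ := β / Real.sqrt (α * γ) with hQdef
  set s : ℝ := Real.sqrt α with hsdef
  set t : ℝ := Real.sqrt γ with htdef
  have hs : 0 < s := Real.sqrt_pos.mpr hα
  have ht : 0 < t := Real.sqrt_pos.mpr hγ
  have hs2 : s ^ 2 = α := Real.sq_sqrt hα.le
  have ht2 : t ^ 2 = γ := Real.sq_sqrt hγ.le
  have hst : Real.sqrt (α * γ) = s * t := Real.sqrt_mul hα.le γ
  have hstne : Real.sqrt (α * γ) ≠ 0 := by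
    rw [hst]; positivity
  have hβ : β = Q * (s * t) := by
    rw [hQdef, ← hst]
    field_simp
  -- compute the real part
  have hre : ((α : ℂ) * (ξ1 + η1 * I) ^ 4 + 2 * β * (ξ1 + η1 * I) ^ 2 * (ξ2 + η2 * I) ^ 2
        + γ * (ξ2 + η2 * I) ^ 4).re
      = α * (ξ1 ^ 4 - 6 * ξ1 ^ 2 * η1 ^ 2 + η1 ^ 4)
        + 2 * β * ((ξ1 ^ 2 - η1 ^ 2) * (ξ2 ^ 2 - η2 ^ 2) - 4 * ξ1 * η1 * ξ2 * η2)
        + γ * (ξ2 ^ 4 - 6 * ξ2 ^ 2 * η2 ^ 2 + η2 ^ 4) := by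
    have h : ((α : ℂ) * (ξ1 + η1 * I) ^ 4 + 2 * β * (ξ1 + η1 * I) ^ 2 * (ξ2 + η2 * I) ^ 2
        + γ * (ξ2 + η2 * I) ^ 4)
      = ((α * (ξ1 ^ 4 - 6 * ξ1 ^ 2 * η1 ^ 2 + η1 ^ 4)
        + 2 * β * ((ξ1 ^ 2 - η1 ^ 2) * (ξ2 ^ 2 - η2 ^ 2) - 4 * ξ1 * η1 * ξ2 * η2)
        + γ * (ξ2 ^ 4 - 6 * ξ2 ^ 2 * η2 ^ 2 + η2 ^ 4) : ℝ) : ℂ)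
        + ((α * (4 * ξ1 ^ 3 * η1 - 4 * ξ1 * η1 ^ 3)
          + 2 * β * (2 * ξ1 * η1 * (ξ2 ^ 2 - η2 ^ 2) + 2 * ξ2 * η2 * (ξ1 ^ 2 - η1 ^ 2))
          + γ * (4 * ξ2 ^ 3 * η2 - 4 * ξ2 * η2 ^ 3) : ℝ) : ℂ) * I := by
      push_cast
      linear_combination ((α : ℂ) * (6 * ξ1 ^ 2 * η1 ^ 2 + 4 * ξ1 * η1 ^ 3 * I
          + η1 ^ 4 * (I ^ 2 - 1))
        + 2 * (β : ℂ) * (4 * ξ1 * η1 * ξ2 * η2 + η1 ^ 2 * ((ξ2 : ℂ) + η2 * I) ^ 2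
          + η2 ^ 2 * (((ξ1 : ℂ) ^ 2 - η1 ^ 2) + 2 * ξ1 * η1 * I))
        + (γ : ℂ) * (6 * ξ2 ^ 2 * η2 ^ 2 + 4 * ξ2 * η2 ^ 3 * I
          + η2 ^ 4 * (I ^ 2 - 1))) * Complex.I_sq
    rw [h]
    simp only [Complex.add_re, Complex.mul_re, Complex.ofReal_re, Complex.ofReal_im,
      Complex.I_re, Complex.I_im]
    ring
  rw [hre]
  set a : ℝ := s * ξ1 ^ 2 with hadef
  set b : ℝ := s * η1 ^ 2 with hbdef
  set c : ℝ := t * ξ2 ^ 2 with hcdef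
  set d : ℝ := t * η2 ^ 2 with hddef
  set m : ℝ := s * (ξ1 * η1) with hmdef
  set n : ℝ := t * (ξ2 * η2) with hndef
  have hab : m ^ 2 = a * b := by rw [hadef, hbdef, hmdef]; ring
  have hcd : n ^ 2 = c * d := by rw [hcdef, hddef, hndef]; ring
  have hmn : 0 ≤ 2 * m * n + a * d + b * c := by
    have h : 2 * m * n + a * d + b * c = s * t * (ξ1 * η2 + η1 * ξ2) ^ 2 := by
      rw [hadef, hbdef, hcdef, hddef, hmdef, hndef]; ring
    rw [h]
    positivity
  have key := key_ineq Q a b c d m n hQ1 hQ2 hab hcd hmn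
  have hQ0 : 0 < 1 + Q := by linarith
  have h1Q : (0 : ℝ) < (1 + Q) ^ 2 := by positivity
  have e1 : α * (ξ1 ^ 4 - 6 * ξ1 ^ 2 * η1 ^ 2 + η1 ^ 4)
        + 2 * β * ((ξ1 ^ 2 - η1 ^ 2) * (ξ2 ^ 2 - η2 ^ 2) - 4 * ξ1 * η1 * ξ2 * η2)
        + γ * (ξ2 ^ 4 - 6 * ξ2 ^ 2 * η2 ^ 2 + η2 ^ 4)
      = a ^ 2 - 6 * m ^ 2 + b ^ 2 + 2 * Q * (a - b) * (c - d) - 8 * Q * m * n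
          + c ^ 2 - 6 * n ^ 2 + d ^ 2 := by
    rw [← hs2, ← ht2, hβ, hadef, hbdef, hcdef, hddef, hmdef, hndef]
    ring
  have e2 : α * η1 ^ 4 + 2 * β * η1 ^ 2 * η2 ^ 2 + γ * η2 ^ 4
      = b ^ 2 + 2 * Q * b * d + d ^ 2 := by
    rw [← hs2, ← ht2, hβ, hbdef, hddef]
    ring
  rw [e1, e2, ge_iff_le, ← sub_nonneg]
  have h : (a ^ 2 - 6 * m ^ 2 + b ^ 2 + 2 * Q * (a - b) * (c - d) - 8 * Q * m * n
          + c ^ 2 - 6 * n ^ 2 + d ^ 2)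
        - -(8 * (1 - Q) / (1 + Q) ^ 2) * (b ^ 2 + 2 * Q * b * d + d ^ 2)
      = ((1 + Q) ^ 2 * (a ^ 2 - 6 * m ^ 2 + b ^ 2 + 2 * Q * (a - b) * (c - d) - 8 * Q * m * n
          + c ^ 2 - 6 * n ^ 2 + d ^ 2)
        + 8 * (1 - Q) * (b ^ 2 + 2 * Q * b * d + d ^ 2)) / (1 + Q) ^ 2 := by
    field_simp
    ring
  rw [h]
  positivity
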